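/- arXiv:1108.5148 — 2 statements merged into one kernel-verified Lean document; each statement's English description precedes it below -/
import Mathlib

section
/- Shannon's perfect-cipher keyspace bound: let K, M, C be finite types with M nonempty, let e : K → M → C be an encryption function such that e k : M → C is injective for every key k (decryption correctness), let κ be a probability mass function on K (the key distribution) and μ a probability mass function on M with μ m > 0 for all m (a full-support plaintext prior), with key and plaintext independent. If the scheme has perfect secrecy, i.e. for all plaintexts m, m' and all ciphertexts c, the probability over κ that the key k satisfies e k m = c equals the probability that e k m' = c, then |K| ≥ |M|. -/
/-!
Fix a key `k₀` of positive probability, a plaintext `m₀`, and let `c := e k₀ m₀`. Perfect secrecy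
makes `c` a possible ciphertext of every plaintext `m`, so some key `k m` encrypts `m` to `c`.
Since each `e k` is injective, a single key cannot encrypt two plaintexts to `c`, so `m ↦ k m`
is injective and `|M| ≤ |K|`.
-/

theorem PMF.exists_mem_support_eq_of_map_eq {α β : Type*} {p : PMF α} {f g : α → β}
    (h : p.map f = p.map g) {a : α} (ha : a ∈ p.support) :
    ∃ a' ∈ p.support, g a' = f a := by
  rw [← PMF.mem_support_map_iff, ← h, PMF.mem_support_map_iff]
  exact ⟨a, ha, rfl⟩

theorem Fintype.card_le_of_forall_exists_eq {K M C : Type*} [Fintype K] [Fintype M]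
    (e : K → M → C) (hinj : ∀ k, Function.Injective (e k)) (c : C)
    (hc : ∀ m, ∃ k, e k m = c) :
    Fintype.card M ≤ Fintype.card K := by
  choose key hkey using hc
  refine Fintype.card_le_of_injective key fun m m' hmm' => hinj (key m) ?_
  rw [hkey m, hmm', hkey m']

theorem shannon_keyspace_bound_general (K M C : Type) [Fintype K] [Fintype M]
    [Nonempty M]
    (e : K → M → C) (hinj : ∀ k, Function.Injective (e k))
    (κ : PMF K)
    (hperfect : ∀ (m m' : M) (c : C),
      (κ.map (fun k => e k m)) c = (κ.map (fun k => e k m')) c) :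
    Fintype.card M ≤ Fintype.card K := by
  obtain ⟨m₀⟩ := ‹Nonempty M›
  obtain ⟨k₀, hk₀⟩ := κ.support_nonempty
  refine Fintype.card_le_of_forall_exists_eq e hinj (e k₀ m₀) fun m => ?_
  obtain ⟨k, -, hk⟩ :=
    PMF.exists_mem_support_eq_of_map_eq (PMF.ext (hperfect m₀ m)) hk₀
  exact ⟨k, hk⟩

/-- Shannon's perfect-cipher keyspace bound: for finite types `K`, `M`, `C` with `M`
nonempty, an encryption function `e : K → M → C` that is injective in the plaintext for
every key (decryption correctness), a key distribution `κ`, and a full-support plaintext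
prior `μ` chosen independently of the key, perfect secrecy (the distribution of the
ciphertext over the random key does not depend on the plaintext) implies `|K| ≥ |M|`. -/
theorem shannon_keyspace_bound (K M C : Type) [Fintype K] [Fintype M] [Fintype C]
    [Nonempty M]
    (e : K → M → C) (hinj : ∀ k, Function.Injective (e k))
    (κ : PMF K) (μ : PMF M) (hμ : ∀ m, 0 < μ m)
    (hperfect : ∀ (m m' : M) (c : C),
      (κ.map (fun k => e k m)) c = (κ.map (fun k => e k m')) c) :
    Fintype.card M ≤ Fintype.card K :=
  shannon_keyspace_bound_general K M C e hinj κ hperfect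
end

section
/- Corollary to the Shannon bound for CD-PHY with block messages: let M ≥ 1 and n ≥ 1, let messages be n-symbol strings Fin n → Fin M, let keys be permutations σ of Fin M acting symbol-wise on messages (e σ m = σ ∘ m, which is injective in m for each σ). If there is a key distribution κ on Equiv.Perm (Fin M) and a full-support message prior μ (μ m > 0 for all m), with key independent of message, such that the scheme has perfect secrecy (for all messages m, m' and ciphertexts c, the probability over κ that σ ∘ m = c equals the probability that σ ∘ m' = c), then M^n ≤ M!. -/
/-!
Shannon's counting argument: under perfect secrecy every ciphertext that some message can
produce can be produced from every message, so fixing one such ciphertext `c` and choosing for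
each message `m` a key sending `m` to `c` gives a map from messages to keys. Since encryption
under a fixed key is injective, this map is injective, so there are at least as many keys
(`M!` permutations) as messages (`M ^ n` strings).
-/

def PMF.IsPerfectlySecret {K X C : Type*} (κ : PMF K) (e : K → X → C) : Prop :=
  ∀ m m' c, (κ.map fun k => e k m) c = (κ.map fun k => e k m') c

namespace PMF.IsPerfectlySecret

variable {K X C : Type*} {κ : PMF K} {e : K → X → C}

theorem exists_key_of_mem_support (h : κ.IsPerfectlySecret e) {m₀ : X} {c : C}
    (hc : c ∈ (κ.map fun k => e k m₀).support) (m : X) : ∃ k, e k m = c := by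
  have hm : c ∈ (κ.map fun k => e k m).support := by
    rw [PMF.mem_support_iff] at hc ⊢
    rwa [h m m₀ c]
  obtain ⟨k, -, hk⟩ := (PMF.mem_support_map_iff _ _ _).mp hm
  exact ⟨k, hk⟩

theorem card_le_card_keys [Fintype K] [Fintype X] (h : κ.IsPerfectlySecret e)
    (he : ∀ k, Function.Injective (e k)) : Fintype.card X ≤ Fintype.card K := by
  cases isEmpty_or_nonempty X with
  | inl _ => simp
  | inr hX =>
    obtain ⟨m₀⟩ := hX
    obtain ⟨c, hc⟩ := (κ.map fun k => e k m₀).support_nonempty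
    choose key hkey using h.exists_key_of_mem_support hc
    refine Fintype.card_le_of_injective key fun m m' hmm' => he (key m) ?_
    rw [hkey m, hmm', hkey m']

end PMF.IsPerfectlySecret

theorem cdphy_block_message_bound_general (M n : ℕ)
    (κ : PMF (Equiv.Perm (Fin M)))
    (hperfect : ∀ (m m' c : Fin n → Fin M),
      (κ.map (fun σ : Equiv.Perm (Fin M) => ⇑σ ∘ m)) c = (κ.map (fun σ : Equiv.Perm (Fin M) => ⇑σ ∘ m')) c) :
    M ^ n ≤ Nat.factorial M := by
  have hcard : Fintype.card (Fin n → Fin M) ≤ Fintype.card (Equiv.Perm (Fin M)) :=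
    PMF.IsPerfectlySecret.card_le_card_keys (e := fun (σ : Equiv.Perm (Fin M)) m => ⇑σ ∘ m) hperfect
      fun σ => σ.injective.comp_left
  simpa [Fintype.card_fun, Fintype.card_perm] using hcard

/-- Corollary to the Shannon bound for CD-PHY with block messages: messages are
`n`-symbol strings over an `M`-ary alphabet, keys are permutations of the alphabet acting
symbol-wise. If some key distribution `κ` and full-support message prior `μ` (independent
of the key) achieve perfect secrecy, then `M ^ n ≤ M!`. -/
theorem cdphy_block_message_bound (M n : ℕ) (hM : 1 ≤ M) (hn : 1 ≤ n)
    (κ : PMF (Equiv.Perm (Fin M))) (μ : PMF (Fin n → Fin M))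
    (hμ : ∀ m, 0 < μ m)
    (hperfect : ∀ (m m' c : Fin n → Fin M),
      (κ.map (fun σ : Equiv.Perm (Fin M) => ⇑σ ∘ m)) c = (κ.map (fun σ : Equiv.Perm (Fin M) => ⇑σ ∘ m')) c) :
    M ^ n ≤ Nat.factorial M :=
  cdphy_block_message_bound_general M n κ hperfect
end
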